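/- Let K_{1,n} be the star with n ≥ 3 leaves and let p ≥ 2 be an integer. Then C_{p,1}^T(K_{1,n}) ≤ n + 2p − 1. -/

import Mathlib

open SimpleGraph

/-- A (p,1)-total labelling of `G`: adjacent vertices get distinct colors, edges sharing an
endpoint get distinct colors, and a vertex and an incident edge differ by at least `p`. -/
def IsPOneTotalLabelling {V : Type*} (G : SimpleGraph V) (p : ℕ)
    (cv : V → ℤ) (ce : G.edgeSet → ℤ) : Prop :=
  (∀ u v : V, G.Adj u v → cv u ≠ cv v) ∧
  (∀ e f : G.edgeSet, e ≠ f → (∃ v : V, v ∈ (e : Sym2 V) ∧ v ∈ (f : Sym2 V)) → ce e ≠ ce f) ∧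
  (∀ (v : V) (e : G.edgeSet), v ∈ (e : Sym2 V) → (p : ℤ) ≤ |cv v - ce e|)

/-- χ_{p,1}^T(G): least `k` such that `G` has a (p,1)-total labelling with colors in
`{0, …, k-1}`. -/
noncomputable def pOneTotalChromatic {V : Type*} (G : SimpleGraph V) (p : ℕ) : ℕ :=
  sInf {k : ℕ | ∃ cv ce, IsPOneTotalLabelling G p cv ce ∧
    (∀ v : V, cv v ∈ Set.Ico (0 : ℤ) k) ∧ (∀ e : G.edgeSet, ce e ∈ Set.Ico (0 : ℤ) k)}

/-- λ_p^T(G): least `k` such that `G` has a (p,1)-total labelling with colors in `{0, …, k}`. -/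
noncomputable def pOneTotalNumber {V : Type*} (G : SimpleGraph V) (p : ℕ) : ℕ :=
  sInf {k : ℕ | ∃ cv ce, IsPOneTotalLabelling G p cv ce ∧
    (∀ v : V, cv v ∈ Set.Icc (0 : ℤ) k) ∧ (∀ e : G.edgeSet, ce e ∈ Set.Icc (0 : ℤ) k)}

/-- `G` is `L`-(p,1)-total labelable for list assignment `(Lv, Le)`. -/
def ListPOneTotalLabelable {V : Type*} (G : SimpleGraph V) (p : ℕ)
    (Lv : V → Finset ℤ) (Le : G.edgeSet → Finset ℤ) : Prop :=
  ∃ cv ce, IsPOneTotalLabelling G p cv ce ∧ (∀ v, cv v ∈ Lv v) ∧ (∀ e, ce e ∈ Le e)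

/-- C_{p,1}^T(G): least `k` such that `G` is `L`-(p,1)-total labelable for every list
assignment whose lists all have size `k`. -/
noncomputable def pOneTotalChoosability {V : Type*} (G : SimpleGraph V) (p : ℕ) : ℕ :=
  sInf {k : ℕ | ∀ (Lv : V → Finset ℤ) (Le : G.edgeSet → Finset ℤ),
    (∀ v, (Lv v).card = k) → (∀ e, (Le e).card = k) → ListPOneTotalLabelable G p Lv Le}

/-- An L(p,q)-labelling of `H`. -/
def IsLpqLabelling {V : Type*} (H : SimpleGraph V) (p q : ℕ) (f : V → ℤ) : Prop :=
  (∀ u v : V, H.Adj u v → (p : ℤ) ≤ |f u - f v|) ∧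
  (∀ u v : V, H.dist u v = 2 → (q : ℤ) ≤ |f u - f v|)

/-- χ^{p,q}(H): least `k` such that `H` has an L(p,q)-labelling with colors in `{0, …, k-1}`. -/
noncomputable def LpqChromatic {V : Type*} (H : SimpleGraph V) (p q : ℕ) : ℕ :=
  sInf {k : ℕ | ∃ f, IsLpqLabelling H p q f ∧ ∀ v : V, f v ∈ Set.Ico (0 : ℤ) k}

/-- χ_l^{p,q}(H): least `k` such that from every assignment of lists of size `k`, `H` has an
L(p,q)-labelling choosing each vertex's color from its list. -/
noncomputable def listLpqChromatic {V : Type*} (H : SimpleGraph V) (p q : ℕ) : ℕ :=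
  sInf {k : ℕ | ∀ L : V → Finset ℤ, (∀ v, (L v).card = k) →
    ∃ f, IsLpqLabelling H p q f ∧ ∀ v : V, f v ∈ L v}

/-- The star `K_{1,n}`: vertex `0` is the center, adjacent to the `n` leaves. -/
def starGraph (n : ℕ) : SimpleGraph (Fin (n + 1)) :=
  SimpleGraph.fromRel (fun v w => v = 0 ∨ w = 0)

/-- The incidence graph `S_I(G)`: replace every edge of `G` by a path of length 2. -/
def incidenceGraph {V : Type*} (G : SimpleGraph V) : SimpleGraph (V ⊕ G.edgeSet) where
  Adj x y :=
    (∃ (v : V) (e : G.edgeSet), x = Sum.inl v ∧ y = Sum.inr e ∧ v ∈ (e : Sym2 V)) ∨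
    (∃ (v : V) (e : G.edgeSet), x = Sum.inr e ∧ y = Sum.inl v ∧ v ∈ (e : Sym2 V))
  symm := ⟨by
    rintro x y (⟨v, e, rfl, rfl, h⟩ | ⟨v, e, rfl, rfl, h⟩)
    · exact Or.inr ⟨v, e, rfl, rfl, h⟩
    · exact Or.inl ⟨v, e, rfl, rfl, h⟩⟩
  loopless := ⟨by
    rintro x (⟨v, e, h1, h2, -⟩ | ⟨v, e, h1, h2, -⟩) <;> subst h1 <;> simp at h2⟩

/-- `H` is a minor of `G`: there are pairwise disjoint nonempty connected branch sets in `G`,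
one for each vertex of `H`, with an edge of `G` between the branch sets of any two vertices
adjacent in `H`. -/
def IsGraphMinor {W V : Type*} (H : SimpleGraph W) (G : SimpleGraph V) : Prop :=
  ∃ B : W → Set V,
    (∀ w, (B w).Nonempty) ∧
    (∀ w, (G.induce (B w)).Connected) ∧
    (∀ w₁ w₂, w₁ ≠ w₂ → Disjoint (B w₁) (B w₂)) ∧
    (∀ w₁ w₂, H.Adj w₁ w₂ → ∃ v₁ ∈ B w₁, ∃ v₂ ∈ B w₂, G.Adj v₁ v₂)

/-- A graph is outerplanar iff it has neither `K₄` nor `K_{2,3}` as a minor. -/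
def Outerplanar {V : Type*} (G : SimpleGraph V) : Prop :=
  ¬ IsGraphMinor (completeGraph (Fin 4)) G ∧
  ¬ IsGraphMinor (completeBipartiteGraph (Fin 2) (Fin 3)) G

/-
Color the center first. Each edge must then avoid the `2p - 1` integers within distance `p - 1`
of the center's color, which leaves at least `n` colors on every edge list; since the `n` edges
pairwise meet at the center, Hall's theorem gives them distinct colors. Finally each leaf must
avoid the center's color and the `2p - 1` integers near the color of its edge, which still
leaves at least `n - 1 ≥ 1` colors on its list.
-/

open Function

theorem Finset.exists_injective_forall_mem_of_card_le {ι α : Type*} [Fintype ι] [DecidableEq α]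
    (t : ι → Finset α) (ht : ∀ i, Fintype.card ι ≤ (t i).card) :
    ∃ f : ι → α, Injective f ∧ ∀ i, f i ∈ t i := by
  refine (Finset.all_card_le_biUnion_card_iff_exists_injective t).mp fun s => ?_
  obtain rfl | ⟨i, hi⟩ := s.eq_empty_or_nonempty
  · simp
  calc s.card ≤ Fintype.card ι := s.card_le_univ
    _ ≤ (t i).card := ht i
    _ ≤ (s.biUnion t).card := Finset.card_le_card (Finset.subset_biUnion_of_mem t hi)

theorem Finset.card_le_card_filter_le_abs_sub_add (s : Finset ℤ) (a : ℤ) (p : ℕ) :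
    s.card ≤ (s.filter fun x => (p : ℤ) ≤ |x - a|).card + (2 * p - 1) := by
  have hnear : (s.filter fun x => ¬ (p : ℤ) ≤ |x - a|) ⊆ Finset.Ioo (a - p) (a + p) := by
    intro x hx
    rw [Finset.mem_filter, not_le, abs_lt] at hx
    rw [Finset.mem_Ioo]
    constructor <;> linarith [hx.2.1, hx.2.2]
  have hcard : (Finset.Ioo (a - p) (a + p)).card = 2 * p - 1 := by
    rw [Int.card_Ioo]; omega
  rw [← Finset.card_filter_add_card_filter_not (fun x => (p : ℤ) ≤ |x - a|)]
  exact Nat.add_le_add_left (hcard ▸ Finset.card_le_card hnear) _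

theorem Finset.exists_mem_ne_and_le_abs_sub (s : Finset ℤ) (b a : ℤ) (p : ℕ)
    (hs : 2 * p - 1 + 1 < s.card) : ∃ x ∈ s, x ≠ b ∧ (p : ℤ) ≤ |x - a| := by
  have hfar := s.card_le_card_filter_le_abs_sub_add a p
  have herase := (s.filter fun x => (p : ℤ) ≤ |x - a|).pred_card_le_card_erase (a := b)
  obtain ⟨x, hx⟩ : ((s.filter fun x => (p : ℤ) ≤ |x - a|).erase b).Nonempty :=
    Finset.card_pos.mp (by omega)
  simp only [Finset.mem_erase, Finset.mem_filter] at hx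
  exact ⟨x, hx.2.1, hx.1, hx.2.2⟩

namespace StarGraph

variable {n : ℕ}

theorem adj_iff {u v : Fin (n + 1)} :
    (_root_.starGraph n).Adj u v ↔ u ≠ v ∧ (u = 0 ∨ v = 0) := by
  simp only [_root_.starGraph, fromRel_adj, or_comm (a := v = 0), or_self]

def edge (v : Fin (n + 1)) (hv : v ≠ 0) : (_root_.starGraph n).edgeSet :=
  ⟨s(0, v), adj_iff.mpr ⟨hv.symm, Or.inl rfl⟩⟩

theorem exists_eq_edge (e : (_root_.starGraph n).edgeSet) :
    ∃ v, ∃ hv : v ≠ 0, e = edge v hv := by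
  obtain ⟨e, he⟩ := e
  induction e using Sym2.ind with
  | _ a b =>
    obtain ⟨hab, rfl | rfl⟩ := adj_iff.mp he
    · exact ⟨b, hab.symm, rfl⟩
    · exact ⟨a, hab, Subtype.ext Sym2.eq_swap⟩

theorem card_edgeSet_le [Fintype (_root_.starGraph n).edgeSet] :
    Fintype.card (_root_.starGraph n).edgeSet ≤ n := by
  have hsurj : Surjective fun v : {v : Fin (n + 1) // v ≠ 0} => edge v.1 v.2 := fun e => by
    obtain ⟨v, hv, rfl⟩ := exists_eq_edge e
    exact ⟨⟨v, hv⟩, rfl⟩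
  simpa [Fintype.card_subtype_compl] using Fintype.card_le_of_surjective _ hsurj

theorem isPOneTotalLabelling {p : ℕ} {cv : Fin (n + 1) → ℤ}
    {ce : (_root_.starGraph n).edgeSet → ℤ}
    (hce : Injective ce) (hleaf : ∀ v ≠ 0, cv v ≠ cv 0)
    (hcenter : ∀ e, (p : ℤ) ≤ |cv 0 - ce e|)
    (hpendant : ∀ v (hv : v ≠ 0), (p : ℤ) ≤ |cv v - ce (edge v hv)|) :
    IsPOneTotalLabelling (_root_.starGraph n) p cv ce := by
  refine ⟨fun u v huv => ?_, fun e f hef _ => hce.ne hef, fun v e hve => ?_⟩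
  · obtain ⟨huv, rfl | rfl⟩ := adj_iff.mp huv
    · exact (hleaf v huv.symm).symm
    · exact hleaf u huv
  · obtain ⟨w, hw, rfl⟩ := exists_eq_edge e
    obtain rfl | rfl := Sym2.mem_iff.mp hve
    · exact hcenter _
    · exact hpendant v hw

theorem listPOneTotalLabelable {p : ℕ} (hn : 2 ≤ n) (hp : 1 ≤ p)
    (Lv : Fin (n + 1) → Finset ℤ) (Le : (_root_.starGraph n).edgeSet → Finset ℤ)
    (hLv : ∀ v, n + 2 * p - 1 ≤ (Lv v).card) (hLe : ∀ e, n + 2 * p - 1 ≤ (Le e).card) :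
    ListPOneTotalLabelable (_root_.starGraph n) p Lv Le := by
  classical
  obtain ⟨c₀, hc₀⟩ : (Lv 0).Nonempty := Finset.card_pos.mp (by have := hLv 0; omega)
  have : Fintype (_root_.starGraph n).edgeSet := Fintype.ofFinite _
  obtain ⟨ce, hce, hce_mem⟩ := Finset.exists_injective_forall_mem_of_card_le
    (fun e => (Le e).filter fun x => (p : ℤ) ≤ |x - c₀|) fun e => by
      have := (Le e).card_le_card_filter_le_abs_sub_add c₀ p
      have := hLe e
      have := card_edgeSet_le (n := n)
      omega
  have hleaf (v : Fin (n + 1)) (hv : v ≠ 0) :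
      ∃ x ∈ Lv v, x ≠ c₀ ∧ (p : ℤ) ≤ |x - ce (edge v hv)| :=
    (Lv v).exists_mem_ne_and_le_abs_sub c₀ _ p (by have := hLv v; omega)
  choose leafColor hleaf_mem hleaf_ne hleaf_far using hleaf
  let cv : Fin (n + 1) → ℤ := fun v => if hv : v = 0 then c₀ else leafColor v hv
  have hcv₀ : cv 0 = c₀ := dif_pos rfl
  have hcv (v) (hv : v ≠ 0) : cv v = leafColor v hv := dif_neg hv
  refine ⟨cv, ce, isPOneTotalLabelling hce (fun v hv => ?_) (fun e => ?_) (fun v hv => ?_),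
    fun v => ?_, fun e => (Finset.mem_filter.mp (hce_mem e)).1⟩
  · rw [hcv v hv, hcv₀]; exact hleaf_ne v hv
  · rw [hcv₀, abs_sub_comm]; exact (Finset.mem_filter.mp (hce_mem e)).2
  · rw [hcv v hv]; exact hleaf_far v hv
  · by_cases hv : v = 0
    · subst hv; rw [hcv₀]; exact hc₀
    · rw [hcv v hv]; exact hleaf_mem v hv

end StarGraph

/-- C_{p,1}^T(K_{1,n}) ≤ n + 2p − 1 for n ≥ 3 and p ≥ 2. -/
theorem pOneTotalChoosability_starGraph_le (n p : ℕ) (hn : 3 ≤ n) (hp : 2 ≤ p) :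
    pOneTotalChoosability (_root_.starGraph n) p ≤ n + 2 * p - 1 :=
  Nat.sInf_le fun Lv Le hLv hLe => StarGraph.listPOneTotalLabelable (by omega) (by omega) Lv Le
    (fun v => (hLv v).ge) (fun e => (hLe e).ge)
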